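/- arXiv:2107.14580 — 3 statements merged into one kernel-verified Lean document; each statement's English description precedes it below -/
import Mathlib

section
/- Let g : [0,∞) → [0,∞) be continuously differentiable and let γ : [0,∞) → (0,∞) and β : [0,∞) → (0,∞) be continuous functions such that g'(t) ≤ -γ(t)·g(t) + β(t) for all t ≥ 0. If ∫₀^∞ γ(t) dt = ∞ and lim_{t→∞} β(t)/γ(t) = 0, then lim_{t→∞} g(t) = 0. -/
open MeasureTheory intervalIntegral Filter

/-!
Write `Γ(t) = ∫₀ᵗ γ`. Given `ε > 0`, eventually `β ≤ ε γ`, so `g' ≤ -γ (g - ε)`, and the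
integrating factor `e^Γ` makes `(g - ε) e^Γ` nonincreasing. Hence
`g(t) ≤ ε + (g(T) - ε) e^{Γ(T) - Γ(t)}`, and the last term tends to `0` because `Γ → ∞`.
-/

theorem hasDerivAt_integral_of_continuousOn_Ici {E : Type*} [NormedAddCommGroup E]
    [NormedSpace ℝ E] [CompleteSpace E] {f : ℝ → E} {a t : ℝ} (hf : ContinuousOn f (Set.Ici a))
    (ht : a < t) : HasDerivAt (fun u => ∫ x in a..u, f x) (f t) t :=
  integral_hasDerivAt_right
    ((hf.mono Set.Icc_subset_Ici_self).intervalIntegrable_of_Icc ht.le)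
    ((hf.mono Set.Ioi_subset_Ici_self).stronglyMeasurableAtFilter isOpen_Ioi t ht)
    (hf.continuousAt (Ici_mem_nhds ht))

theorem le_mul_exp_sub_of_hasDerivAt_le_neg_mul {f f' γ Γ : ℝ → ℝ} {a : ℝ}
    (hf : ∀ t ≥ a, HasDerivAt f (f' t) t) (hΓ : ∀ t ≥ a, HasDerivAt Γ (γ t) t)
    (hle : ∀ t ≥ a, f' t ≤ -γ t * f t) {t : ℝ} (ht : a ≤ t) :
    f t ≤ f a * Real.exp (Γ a - Γ t) := by
  have hderiv : ∀ s ≥ a, HasDerivAt (fun u => f u * Real.exp (Γ u))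
      ((f' s + γ s * f s) * Real.exp (Γ s)) s := fun s hs =>
    ((hf s hs).mul (hΓ s hs).exp).congr_deriv (by ring)
  have hanti : AntitoneOn (fun u => f u * Real.exp (Γ u)) (Set.Ici a) := by
    refine antitoneOn_of_hasDerivWithinAt_nonpos (convex_Ici a)
      (fun s hs => (hderiv s hs).continuousAt.continuousWithinAt)
      (fun s hs => (hderiv s (interior_subset hs)).hasDerivWithinAt) fun s hs => ?_
    have := hle s (interior_subset hs)
    exact mul_nonpos_of_nonpos_of_nonneg (by linarith) (Real.exp_pos _).le
  rw [Real.exp_sub, mul_div_assoc', le_div_iff₀ (Real.exp_pos _)]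
  exact hanti Set.self_mem_Ici ht ht

theorem eventually_lt_of_hasDerivAt_le_neg_mul_sub {g g' γ Γ : ℝ → ℝ} {c d : ℝ}
    (hg : ∀ᶠ t in atTop, HasDerivAt g (g' t) t) (hΓ : ∀ᶠ t in atTop, HasDerivAt Γ (γ t) t)
    (hle : ∀ᶠ t in atTop, g' t ≤ -γ t * (g t - c)) (hΓ_top : Tendsto Γ atTop atTop)
    (hcd : c < d) : ∀ᶠ t in atTop, g t < d := by
  obtain ⟨a, ha⟩ := eventually_atTop.mp (hg.and (hΓ.and hle))
  have hbound : ∀ t ≥ a, g t - c ≤ (g a - c) * Real.exp (Γ a - Γ t) :=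
    fun t => le_mul_exp_sub_of_hasDerivAt_le_neg_mul (f := fun u => g u - c)
      (fun s hs => (ha s hs).1.sub_const c) (fun s hs => (ha s hs).2.1) (fun s hs => (ha s hs).2.2)
  have hdecay : Tendsto (fun t => (g a - c) * Real.exp (Γ a - Γ t)) atTop (nhds 0) := by
    simpa [sub_eq_add_neg] using (Real.tendsto_exp_atBot.comp
      (tendsto_atBot_add_const_left _ (Γ a) (tendsto_neg_atTop_atBot.comp hΓ_top))).const_mul
      (g a - c)
  filter_upwards [eventually_ge_atTop a, hdecay.eventually (gt_mem_nhds (sub_pos.mpr hcd))]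
    with t hat ht
  linarith [hbound t hat]

theorem stmt_1_general (g g' γ β : ℝ → ℝ)
    (hg_nonneg : ∀ t ≥ (0:ℝ), 0 ≤ g t)
    (hg_deriv : ∀ t ≥ (0:ℝ), HasDerivAt g (g' t) t)
    (hγ_cont : ContinuousOn γ (Set.Ici 0))
    (hγ_pos : ∀ t ≥ (0:ℝ), 0 < γ t)
    (hineq : ∀ t ≥ (0:ℝ), g' t ≤ -γ t * g t + β t)
    (hγ_div : Tendsto (fun t => ∫ s in (0:ℝ)..t, γ s) atTop atTop)
    (hβγ : Tendsto (fun t => β t / γ t) atTop (nhds 0)) :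
    Tendsto g atTop (nhds 0) := by
  refine tendsto_order.2 ⟨fun d hd => ?_, fun d hd => ?_⟩
  · filter_upwards [eventually_ge_atTop 0] with t ht
    exact hd.trans_le (hg_nonneg t ht)
  · have hle : ∀ᶠ t in atTop, g' t ≤ -γ t * (g t - d / 2) := by
      filter_upwards [eventually_ge_atTop 0, hβγ.eventually (gt_mem_nhds (half_pos hd))]
        with t ht hβ
      have := (div_lt_iff₀ (hγ_pos t ht)).mp hβ
      linarith [hineq t ht]
    exact eventually_lt_of_hasDerivAt_le_neg_mul_sub
      (eventually_atTop.mpr ⟨0, hg_deriv⟩)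
      (eventually_atTop.mpr ⟨1, fun t ht => hasDerivAt_integral_of_continuousOn_Ici hγ_cont
        (by linarith)⟩)
      hle hγ_div (half_lt_self hd)

/-- Lemma 3 of Liu et al., first consequence: if moreover
`∫₀^∞ γ = ∞` and `β/γ → 0`, then `g → 0`. -/
theorem stmt_1 (g g' γ β : ℝ → ℝ)
    (hg_nonneg : ∀ t ≥ (0:ℝ), 0 ≤ g t)
    (hg_deriv : ∀ t ≥ (0:ℝ), HasDerivAt g (g' t) t)
    (hg'_cont : ContinuousOn g' (Set.Ici 0))
    (hγ_cont : ContinuousOn γ (Set.Ici 0))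
    (hβ_cont : ContinuousOn β (Set.Ici 0))
    (hγ_pos : ∀ t ≥ (0:ℝ), 0 < γ t)
    (hβ_pos : ∀ t ≥ (0:ℝ), 0 < β t)
    (hineq : ∀ t ≥ (0:ℝ), g' t ≤ -γ t * g t + β t)
    (hγ_div : Tendsto (fun t => ∫ s in (0:ℝ)..t, γ s) atTop atTop)
    (hβγ : Tendsto (fun t => β t / γ t) atTop (nhds 0)) :
    Tendsto g atTop (nhds 0) :=
  stmt_1_general g g' γ β hg_nonneg hg_deriv hγ_cont hγ_pos hineq hγ_div hβγ
end

section
/- Let g : [0,∞) → [0,∞) be continuously differentiable and let γ : [0,∞) → (0,∞) and β : [0,∞) → (0,∞) be continuous functions such that g'(t) ≤ -γ(t)·g(t) + β(t) for all t ≥ 0. If ∫₀^∞ γ(t) dt = ∞ and limsup_{t→∞} β(t)/γ(t) < ∞, then the set {g(t) : t ≥ 0} is bounded. -/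
open MeasureTheory intervalIntegral Filter

/-- Lemma 3 of Liu et al., second consequence: if `∫₀^∞ γ = ∞` and
`limsup_{t→∞} β/γ < ∞`, then `{g(t) : t ≥ 0}` is bounded. -/
theorem stmt_2 (g g' γ β : ℝ → ℝ)
    (hg_nonneg : ∀ t ≥ (0:ℝ), 0 ≤ g t)
    (hg_deriv : ∀ t ≥ (0:ℝ), HasDerivAt g (g' t) t)
    (hg'_cont : ContinuousOn g' (Set.Ici 0))
    (hγ_cont : ContinuousOn γ (Set.Ici 0))
    (hβ_cont : ContinuousOn β (Set.Ici 0))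
    (hγ_pos : ∀ t ≥ (0:ℝ), 0 < γ t)
    (hβ_pos : ∀ t ≥ (0:ℝ), 0 < β t)
    (hineq : ∀ t ≥ (0:ℝ), g' t ≤ -γ t * g t + β t)
    (hγ_div : Tendsto (fun t => ∫ s in (0:ℝ)..t, γ s) atTop atTop)
    (hβγ : IsBoundedUnder (· ≤ ·) atTop (fun t => β t / γ t)) :
    Bornology.IsBounded (g '' Set.Ici (0:ℝ)) := by
  obtain ⟨M, hM⟩ := hβγ
  rw [eventually_map, eventually_atTop] at hM
  obtain ⟨T₀, hT₀⟩ := hM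
  set T : ℝ := max T₀ 0 with hT
  have hT0 : (0:ℝ) ≤ T := le_max_right _ _
  set C : ℝ := max (g T) M + 1 with hC
  -- key claim: for t ≥ T, g t ≤ C
  have key : ∀ b ≥ T, ∀ x ∈ Set.Icc T b, g x ≤ C := by
    intro b hb
    have hcont : ContinuousOn g (Set.Icc T b) := fun x hx =>
      ((hg_deriv x (hT0.trans hx.1)).continuousAt).continuousWithinAt
    have hf' : ∀ x ∈ Set.Ico T b, HasDerivWithinAt g (g' x) (Set.Ici x) x := fun x hx =>
      (hg_deriv x (hT0.trans hx.1)).hasDerivWithinAt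
    have := image_le_of_deriv_right_lt_deriv_boundary (B := fun _ => C) (B' := fun _ => 0)
      hcont hf' (by simp only [hC]; linarith [le_max_left (g T) M])
      (fun x => hasDerivAt_const x C)
      ?_
    · intro x hx; exact this hx
    · intro x hx hgx
      have hx0 : (0:ℝ) ≤ x := hT0.trans hx.1
      have hγx := hγ_pos x hx0
      have hβx : β x / γ x ≤ M := hT₀ x ((le_max_left T₀ 0).trans hx.1)
      have hβx' : β x ≤ M * γ x := by
        rw [div_le_iff₀ hγx] at hβx; linarith
      have h1 : g' x ≤ γ x * (M - g x) := by
        have := hineq x hx0; nlinarith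
      have hCM : M < C := by
        have : M ≤ max (g T) M := le_max_right _ _
        simp only [hC]; linarith
      calc g' x ≤ γ x * (M - g x) := h1
        _ < 0 := by rw [hgx]; nlinarith
  -- bounded on [0,T] by compactness, elsewhere by C
  have hcont0 : ContinuousOn g (Set.Icc 0 T) := fun x hx =>
    ((hg_deriv x hx.1).continuousAt).continuousWithinAt
  have hsub : g '' Set.Ici 0 ⊆ g '' Set.Icc 0 T ∪ Set.Icc 0 C := by
    rintro y ⟨x, hx, rfl⟩
    rcases le_total x T with h | h
    · exact Or.inl ⟨x, ⟨hx, h⟩, rfl⟩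
    · exact Or.inr ⟨hg_nonneg x hx, key x h x ⟨h, le_refl x⟩⟩
  exact ((isCompact_Icc.image_of_continuousOn hcont0).isBounded.union
    (Metric.isBounded_Icc 0 C)).subset hsub
end

section
/- Let v > 0, ω₀ ≠ 0, γ ∈ ℝ be real constants, and let r : ℝ → ℂ, θ : ℝ → ℝ be differentiable with r'(t) = v·exp(i·θ(t)). Define the virtual center z(t) := r(t) + (v/ω₀)·i·exp(i·θ(t)), and suppose g, e : ℝ → ℝ are functions such that θ'(t) = ω₀ + γ·ω₀·g(t) + e(t) for all t (the applied zero-order-hold input equals the continuous feedback ω₀ + γ·ω₀·g(t) plus the actuation error e(t)). Then z'(t) = −v·exp(i·θ(t))·(γ·g(t) + e(t)/ω₀) for all t. -/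
open Complex

theorem hasDerivAt_I_mul_cexp_I_mul_ofReal {θ : ℝ → ℝ} {θ' t : ℝ} (h : HasDerivAt θ θ' t) :
    HasDerivAt (fun s => I * exp (I * θ s)) (-(θ' : ℂ) * exp (I * θ t)) t :=
  (((h.ofReal_comp).const_mul I).cexp.const_mul I).congr_deriv <| by
    linear_combination (θ' * exp (I * θ t)) * I_sq

theorem stmt_7_general (v ω₀ γ : ℝ) (hω : ω₀ ≠ 0)
    (r : ℝ → ℂ) (θ : ℝ → ℝ) (g e : ℝ → ℝ)
    (hr : ∀ t, HasDerivAt r ((v : ℂ) * Complex.exp (Complex.I * (θ t : ℂ))) t)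
    (hθ : ∀ t, HasDerivAt θ (ω₀ + γ * ω₀ * g t + e t) t)
    (z : ℝ → ℂ)
    (hz : ∀ t, z t = r t + ((v : ℂ) / (ω₀ : ℂ)) * Complex.I * Complex.exp (Complex.I * (θ t : ℂ))) :
    ∀ t, HasDerivAt z
      (-(v : ℂ) * Complex.exp (Complex.I * (θ t : ℂ))
        * ((γ : ℂ) * (g t : ℂ) + (e t : ℂ) / (ω₀ : ℂ))) t := by
  intro t
  have hz' : z = fun s => r s + (v : ℂ) / ω₀ * (I * exp (I * θ s)) :=
    funext fun s => by rw [hz, mul_assoc]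
  have hω' : (ω₀ : ℂ) ≠ 0 := ofReal_ne_zero.mpr hω
  rw [hz']
  refine ((hr t).add ((hasDerivAt_I_mul_cexp_I_mul_ofReal (hθ t)).const_mul _)).congr_deriv ?_
  -- the `ω₀` part of `θ'` contributes `-v e^{iθ}`, cancelling `r'` exactly
  push_cast
  field_simp
  ring

/-- Virtual-center dynamics under the event-based input: if
`r' = v e^{iθ}` and `θ' = ω₀ + γ ω₀ g + e`, then the virtual center
`z = r + (v/ω₀) i e^{iθ}` satisfies `z' = −v e^{iθ} (γ g + e/ω₀)`. -/
theorem stmt_7 (v ω₀ γ : ℝ) (hv : 0 < v) (hω : ω₀ ≠ 0)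
    (r : ℝ → ℂ) (θ : ℝ → ℝ) (g e : ℝ → ℝ)
    (hr : ∀ t, HasDerivAt r ((v : ℂ) * Complex.exp (Complex.I * (θ t : ℂ))) t)
    (hθ : ∀ t, HasDerivAt θ (ω₀ + γ * ω₀ * g t + e t) t)
    (z : ℝ → ℂ)
    (hz : ∀ t, z t = r t + ((v : ℂ) / (ω₀ : ℂ)) * Complex.I * Complex.exp (Complex.I * (θ t : ℂ))) :
    ∀ t, HasDerivAt z
      (-(v : ℂ) * Complex.exp (Complex.I * (θ t : ℂ))
        * ((γ : ℂ) * (g t : ℂ) + (e t : ℂ) / (ω₀ : ℂ))) t :=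
  stmt_7_general v ω₀ γ hω r θ g e hr hθ z hz
end
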